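/- For every j : Fin 5, every point x of convexHull ℝ V satisfies x j ≤ 1, and the intersection of convexHull ℝ V with the hyperplane {x | x j = 1} equals convexHull ℝ (O j). In other words, each octahedral facet of the rectified 5-cell lies in the hyperplane x_j = 1 and is the convex hull of the six vertices lying on that hyperplane. -/
import Mathlib


noncomputable section

/-- The vertex set of the Euclidean rectified 5-cell: all coordinate
permutations of the point `(1,1,1,0,0)`. -/
def V : Set (EuclideanSpace ℝ (Fin 5)) :=
  {x | (∀ i, x i = 0 ∨ x i = 1) ∧ (∑ i, x i) = 3}

/-- The vertex set of the octahedral facet labelled `j`. -/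
def O (j : Fin 5) : Set (EuclideanSpace ℝ (Fin 5)) := {v ∈ V | v j = 1}

/-- Every point of the rectified 5-cell has `j`-th coordinate at most 1,
and the intersection of the rectified 5-cell with the hyperplane `x j = 1`
is the octahedral facet `convexHull ℝ (O j)`. -/
theorem octahedral_facet (j : Fin 5) :
    (∀ x ∈ convexHull ℝ V, x j ≤ 1) ∧
    convexHull ℝ V ∩ {x | x j = 1} = convexHull ℝ (O j) := by
  have hlin : IsLinearMap ℝ (fun x : EuclideanSpace ℝ (Fin 5) => x j) :=
    ⟨fun x y => rfl, fun c x => rfl⟩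
  have hV1 : ∀ v ∈ V, v j ≤ 1 := by
    intro v hv
    rcases hv.1 j with h | h <;> rw [h] <;> norm_num
  have hbound : ∀ x ∈ convexHull ℝ V, x j ≤ 1 := fun x hx =>
    convexHull_min hV1 (convex_halfSpace_le hlin 1) hx
  refine ⟨hbound, Set.Subset.antisymm ?_ ?_⟩
  · rintro x ⟨hx, hxj⟩
    rw [convexHull_eq] at hx
    obtain ⟨ι, t, w, z, hw0, hw1, hz, hx⟩ := hx
    have hxsum : x = ∑ i ∈ t, w i • z i := by
      rw [← hx, Finset.centerMass_eq_of_sum_1 _ _ hw1]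
    have hxj' : (∑ i ∈ t, w i * z i j) = 1 := by
      have : x j = ∑ i ∈ t, w i * z i j := by
        rw [hxsum]
        exact (map_sum (IsLinearMap.mk' _ hlin) (fun i => w i • z i) t).trans (Finset.sum_congr rfl fun i _ => rfl)
      rw [← this, hxj]
    have hzero : ∀ i ∈ t, w i * (1 - z i j) = 0 := by
      have hsum0 : (∑ i ∈ t, w i * (1 - z i j)) = 0 := by
        have : (∑ i ∈ t, w i * (1 - z i j))
            = (∑ i ∈ t, w i) - (∑ i ∈ t, w i * z i j) := by
          rw [← Finset.sum_sub_distrib]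
          exact Finset.sum_congr rfl fun i _ => by ring
        rw [this, hw1, hxj']; ring
      refine (Finset.sum_eq_zero_iff_of_nonneg ?_).1 hsum0
      intro i hi
      have h1 : z i j ≤ 1 := hV1 _ (hz i hi)
      exact mul_nonneg (hw0 i hi) (by linarith)
    have hkey : ∀ i ∈ t, w i ≠ 0 → z i j = 1 := by
      intro i hi hwne
      have := hzero i hi
      rcases mul_eq_zero.1 this with h | h
      · exact absurd h hwne
      · linarith
    rw [← Finset.centerMass_filter_ne_zero] at hx
    rw [← hx]
    refine Finset.centerMass_mem_convexHull _ ?_ ?_ ?_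
    · intro i hi; exact hw0 i (Finset.mem_filter.1 hi).1
    · rw [Finset.sum_filter_ne_zero, hw1]; norm_num
    · intro i hi
      obtain ⟨hit, hwne⟩ := Finset.mem_filter.1 hi
      exact ⟨hz i hit, hkey i hit hwne⟩
  · intro x hx
    refine ⟨convexHull_mono (fun v hv => hv.1) hx, ?_⟩
    exact convexHull_min (fun v hv => hv.2) (convex_hyperplane hlin 1) hx
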